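/- For every nonnegative integer k and real number a, one has (a+2)^2 * F(a+2,k) - (a+1)^2 * F(a,k) = G(a,k+1) - G(a,k), where F(a,k) = C(a,k)*C(-1-a,k)*C(2k,k)/4^k and G(a,k) = (a+2)(2a+3) * k/(4^{k-1}(a+1+k)) * C(2k-1,k-1)*C(a+1,k-1)*C(-3-a,k-1), with C(x,n) the generalized binomial coefficient x(x-1)...(x-n+1)/n!. -/

import Mathlib

/-!
For `k ≥ 2` every generalized binomial coefficient in the identity is a rational function of
`a` and `k` times `C(a, k-2) * C(-3-a, k-2)`, and every central binomial coefficient is one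
times `C(2k-2, k-1)`; after these substitutions the identity becomes a rational-function
identity in `a` and `k`. The cases `k = 0, 1` are checked directly.
-/

/-- Generalized binomial coefficient `C(x, k) = x(x-1)⋯(x-k+1)/k!` for real `x`. -/
noncomputable def gbc (x : ℝ) (k : ℕ) : ℝ :=
  (∏ i ∈ Finset.range k, (x - i)) / (Nat.factorial k)

noncomputable def F (a : ℝ) (k : ℕ) : ℝ :=
  gbc a k * gbc (-1 - a) k * (Nat.choose (2 * k) k) / 4 ^ k

noncomputable def G (a : ℝ) (k : ℕ) : ℝ :=
  (a + 2) * (2 * a + 3) * k / (4 ^ (k - 1) * (a + 1 + k)) *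
    (Nat.choose (2 * k - 1) (k - 1)) * gbc (a + 1) (k - 1) * gbc (-3 - a) (k - 1)

@[simp]
theorem gbc_zero (x : ℝ) : gbc x 0 = 1 := by
  simp [gbc]

theorem gbc_succ (x : ℝ) (k : ℕ) : gbc x (k + 1) = gbc x k * (x - k) / (k + 1) := by
  simp only [gbc, Finset.prod_range_succ, Nat.factorial_succ]
  push_cast
  field_simp

theorem gbc_add_one_succ (x : ℝ) (k : ℕ) :
    gbc (x + 1) (k + 1) = (x + 1) / (k + 1) * gbc x k := by
  simp only [gbc, Finset.prod_range_succ', Nat.factorial_succ]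
  push_cast
  simp only [add_sub_add_right_eq_sub, sub_zero]
  field_simp

theorem gbc_add_two_add_two (x : ℝ) (k : ℕ) :
    gbc (x + 2) (k + 2) = (x + 2) * (x + 1) / ((k + 2) * (k + 1)) * gbc x k := by
  rw [show x + 2 = x + 1 + 1 by ring, gbc_add_one_succ, gbc_add_one_succ]
  push_cast
  field_simp
  ring

theorem Nat.choose_two_mul_add_one_mul_add_one (m : ℕ) :
    (2 * m + 1).choose m * (m + 1) = (2 * m + 1) * centralBinom m := by
  rw [← choose_symm_half, ← add_one_mul_choose_eq, centralBinom_eq_two_mul_choose]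

theorem F_eq (a : ℝ) (k : ℕ) : F a k = gbc a k * gbc (-1 - a) k * k.centralBinom / 4 ^ k := rfl

@[simp]
theorem G_zero (a : ℝ) : G a 0 = 0 := by
  simp [G]

theorem G_succ (a : ℝ) (k : ℕ) :
    G a (k + 1) = (a + 2) * (2 * a + 3) * (2 * k + 1) / (4 ^ k * (a + 2 + k)) *
      k.centralBinom * gbc (a + 1) k * gbc (-3 - a) k := by
  have hc : ((2 * k + 1).choose k : ℝ) * (k + 1) = (2 * k + 1) * k.centralBinom := by
    exact_mod_cast Nat.choose_two_mul_add_one_mul_add_one k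
  simp only [G, Nat.add_sub_cancel, show 2 * (k + 1) - 1 = 2 * k + 1 by omega]
  push_cast
  rw [show a + 1 + (k + 1) = a + 2 + k by ring]
  linear_combination
    (a + 2) * (2 * a + 3) / (4 ^ k * (a + 2 + k)) * gbc (a + 1) k * gbc (-3 - a) k * hc

theorem sq_mul_F_sub_sq_mul_F_add_two (n : ℕ) (a : ℝ) (h₃ : a + 3 + n ≠ 0)
    (h₄ : a + 4 + n ≠ 0) :
    (a + 2) ^ 2 * F (a + 2) (n + 2) - (a + 1) ^ 2 * F a (n + 2) = G a (n + 3) - G a (n + 2) := by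
  have hcb : ((n + 2).centralBinom : ℝ) = 2 * (2 * n + 3) / (n + 2) * (n + 1).centralBinom := by
    rw [div_mul_eq_mul_div, eq_div_iff (by positivity), mul_comm]
    exact_mod_cast Nat.succ_mul_centralBinom_succ (n + 1)
  have hA₂ : gbc (a + 2) (n + 2) = (a + 2) * (a + 1) / ((n + 2) * (n + 1)) * gbc a n :=
    gbc_add_two_add_two a n
  have hB₂ :
      gbc (-1 - a) (n + 2) = (-1 - a) * (-2 - a) / ((n + 2) * (n + 1)) * gbc (-3 - a) n := by
    rw [show -1 - a = -3 - a + 2 by ring, gbc_add_two_add_two]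
    ring
  have hA : gbc a (n + 2) = gbc a n * (a - n) * (a - n - 1) / ((n + 1) * (n + 2)) := by
    rw [gbc_succ, gbc_succ]
    push_cast
    field_simp
    ring
  have hB : gbc (-3 - a) (n + 2) =
      gbc (-3 - a) n * (-3 - a - n) * (-4 - a - n) / ((n + 1) * (n + 2)) := by
    rw [gbc_succ, gbc_succ]
    push_cast
    field_simp
    ring
  have hB₁ : gbc (-3 - a) (n + 1) = gbc (-3 - a) n * (-3 - a - n) / (n + 1) := gbc_succ _ _
  have hA₁ : gbc (a + 1) (n + 1) = (a + 1) / (n + 1) * gbc a n := gbc_add_one_succ a n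
  have hA₁₂ : gbc (a + 1) (n + 2) = (a + 1) / (n + 2) * (gbc a n * (a - n) / (n + 1)) := by
    rw [gbc_add_one_succ, gbc_succ]
    push_cast
    ring
  rw [F_eq, F_eq, G_succ, G_succ, show -1 - (a + 2) = -3 - a by ring]
  push_cast
  rw [hA₂, hB₂, hA, hB, hB₁, hA₁, hA₁₂, hcb,
    show a + 2 + ((n : ℝ) + 1) = a + 3 + n by ring,
    show a + 2 + ((n : ℝ) + 2) = a + 4 + n by ring]
  field_simp
  ring

theorem stmt0 (k : ℕ) (a : ℝ) (h1 : a + 1 + k ≠ 0) (h2 : a + 2 + k ≠ 0) :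
    (a + 2) ^ 2 * F (a + 2) k - (a + 1) ^ 2 * F a k = G a (k + 1) - G a k := by
  rcases k with _ | _ | n
  · rw [F_eq, F_eq, G_succ, G_zero]
    norm_num at h2 ⊢
    field_simp
    ring
  · have ha2 : a + 2 ≠ 0 := by convert h1 using 1; push_cast; ring
    have ha3 : a + 3 ≠ 0 := by convert h2 using 1; push_cast; ring
    rw [F_eq, F_eq, G_succ, G_succ]
    norm_num [gbc_succ, Nat.centralBinom, Nat.choose]
    rw [show a + 2 + 1 = a + 3 by ring]
    field_simp
    ring
  · exact sq_mul_F_sub_sq_mul_F_add_two n a (by convert h1 using 1; push_cast; ring)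
      (by convert h2 using 1; push_cast; ring)
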